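/- If φ is an element of the color code automorphism group G with even S3×S3-parity, then the induced map on anyons sends each fermion to a fermion in the same fermion group (F to F, F' to F'); if φ has odd S3×S3-parity, it exchanges the two fermion groups. -/

import Mathlib

/-- Permutations of the six labels `{r,g,b,x,y,z}` (encoded as `0,...,5`) that fix the
flavor labels `x,y,z` (indices `3,4,5`) pointwise, hence permute the colors
`r,g,b` (indices `0,1,2`) arbitrarily. -/
def colorPerms : Set (Equiv.Perm (Fin 6)) := {g | ∀ i : Fin 6, 3 ≤ (i : ℕ) → g i = i}

/-- Permutations fixing the color labels `r,g,b` (indices `0,1,2`) pointwise,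
hence permuting the flavors `x,y,z` arbitrarily. -/
def flavorPerms : Set (Equiv.Perm (Fin 6)) := {g | ∀ i : Fin 6, (i : ℕ) < 3 → g i = i}

/-- The color-flavor swap `(r x)(g y)(b z)`. -/
def cfSwap : Equiv.Perm (Fin 6) := Equiv.swap 0 3 * Equiv.swap 1 4 * Equiv.swap 2 5

/-- The color code automorphism group: the subgroup of `S₆` generated by color
permutations, flavor permutations, and the color-flavor swap. -/
def ccAut : Subgroup (Equiv.Perm (Fin 6)) :=
  Subgroup.closure (colorPerms ∪ flavorPerms ∪ {cfSwap})

/-- The `S₃ × S₃`-parity of a permutation `g`: the sign of `g` itself if `g` preserves the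
color set `{r,g,b}`, and otherwise the sign of `(r x)(g y)(b z) · g` (which then preserves
the color set, i.e. lies in `S₃ × S₃`). -/
def s3s3Parity (g : Equiv.Perm (Fin 6)) : ℤˣ :=
  if ∀ i : Fin 6, (i : ℕ) < 3 → ((g i : ℕ) < 3) then Equiv.Perm.sign g
  else Equiv.Perm.sign (cfSwap * g)

/-- The anyon fusion group of the color code: `A = 𝔽₂⁴` with basis
`e 0 = rx`, `e 1 = rz`, `e 2 = bx`, `e 3 = bz`. -/
abbrev Anyon : Type := Fin 4 → ZMod 2

/-- The braiding pairing on `A`: `(rx, bz)` and `(bx, rz)` are dual pairs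
(`θ(rx,bz) = θ(bx,rz) = 1`, all other basis pairings `0`). -/
def braid (a b : Anyon) : ZMod 2 :=
  a 0 * b 3 + a 3 * b 0 + a 1 * b 2 + a 2 * b 1

/-- The two-component vector attached to each of the six labels `r,g,b,x,y,z`:
`r,x ↦ (1,0)`, `g,y ↦ (1,1)`, `b,z ↦ (0,1)`. -/
def labelVec : Fin 6 → Fin 2 → ZMod 2 := ![![1, 0], ![1, 1], ![0, 1], ![1, 0], ![1, 1], ![0, 1]]

def hiIdx : Fin 4 → Fin 2 := ![0, 0, 1, 1]
def loIdx : Fin 4 → Fin 2 := ![0, 1, 0, 1]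

/-- The boson labelled by a color label and a flavor label (accepted in either order):
`gσ = rσ + bσ` and `cy = cx + cz` in terms of the basis `rx, rz, bx, bz` of `A`. -/
def boson (l₁ l₂ : Fin 6) : Anyon :=
  if (l₁ : ℕ) < 3 then fun k => labelVec l₁ (hiIdx k) * labelVec l₂ (loIdx k)
  else fun k => labelVec l₂ (hiIdx k) * labelVec l₁ (loIdx k)

/-- The linear action induced on the anyon group `A` by a permutation of the six labels:
the basis bosons `rx, rz, bx, bz` are sent to the bosons with permuted labels, extended
linearly. -/
def inducedMap (φ : Equiv.Perm (Fin 6)) (a : Anyon) : Anyon :=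
  a 0 • boson (φ 0) (φ 3) + a 1 • boson (φ 0) (φ 5) +
    a 2 • boson (φ 2) (φ 3) + a 3 • boson (φ 2) (φ 5)

/-- Basis anyons: `e 0 = rx`, `e 1 = rz`, `e 2 = bx`, `e 3 = bz`. -/
def e (i : Fin 4) : Anyon := Pi.single i 1

/-- The nine nonzero bosons `cσ` of the color code. -/
def bosons : Set Anyon :=
  {e 0, e 1, e 2, e 3, e 0 + e 2, e 1 + e 3, e 0 + e 1, e 2 + e 3, e 0 + e 1 + e 2 + e 3}

/-- The six fermions: the nonzero elements of `A` that are not bosons. -/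
def fermions : Set Anyon := {a | a ≠ 0 ∧ a ∉ bosons}

/-- The fermion group `F = {rx+gz, bx+rz, gx+bz}`. -/
def fermF : Set Anyon := {e 0 + e 1 + e 3, e 1 + e 2, e 0 + e 2 + e 3}

/-- The fermion group `F' = {rx+bz, gx+rz, rz+by-type}`: the remaining three fermions. -/
def fermF' : Set Anyon := {e 0 + e 3, e 0 + e 1 + e 2, e 1 + e 2 + e 3}

/-!
The colour permutations, the flavour permutations and the colour–flavour swap all preserve the
partition of the six labels into colours and flavours, so `G` lies in the stabilizer of that
partition, a group of order 72. On that stabilizer the claim is a finite computation, checked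
exhaustively.
-/

open Equiv Set

namespace Equiv.Perm

variable {α : Type*}

theorem mapsTo_inv_compl_of_mapsTo {σ : Perm α} {s t : Set α} (h : MapsTo σ s t) :
    MapsTo ⇑σ⁻¹ tᶜ sᶜ :=
  fun x hx hs => hx (by simpa using h hs)

def partitionStabilizer (s : Set α) : Subgroup (Perm α) where
  carrier := {σ | MapsTo σ s s ∧ MapsTo σ sᶜ sᶜ ∨ MapsTo σ s sᶜ ∧ MapsTo σ sᶜ s}
  mul_mem' := by
    rintro σ τ (⟨hσ, hσc⟩ | ⟨hσ, hσc⟩) (⟨hτ, hτc⟩ | ⟨hτ, hτc⟩)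
    · exact .inl ⟨hσ.comp hτ, hσc.comp hτc⟩
    · exact .inr ⟨hσc.comp hτ, hσ.comp hτc⟩
    · exact .inr ⟨hσ.comp hτ, hσc.comp hτc⟩
    · exact .inl ⟨hσc.comp hτ, hσ.comp hτc⟩
  one_mem' := .inl ⟨mapsTo_id s, mapsTo_id sᶜ⟩
  inv_mem' := by
    rintro σ (⟨hσ, hσc⟩ | ⟨hσ, hσc⟩)
    · exact .inl ⟨by simpa only [compl_compl] using mapsTo_inv_compl_of_mapsTo hσc,
        mapsTo_inv_compl_of_mapsTo hσ⟩
    · exact .inr ⟨by simpa only [compl_compl] using mapsTo_inv_compl_of_mapsTo hσ,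
        by simpa only [compl_compl] using mapsTo_inv_compl_of_mapsTo hσc⟩

theorem mem_partitionStabilizer {σ : Perm α} {s : Set α} :
    σ ∈ partitionStabilizer s ↔
      MapsTo σ s s ∧ MapsTo σ sᶜ sᶜ ∨ MapsTo σ s sᶜ ∧ MapsTo σ sᶜ s :=
  Iff.rfl

theorem partitionStabilizer_compl (s : Set α) :
    partitionStabilizer sᶜ = partitionStabilizer s := by
  ext σ
  simp only [mem_partitionStabilizer, compl_compl]
  tauto

theorem mem_partitionStabilizer_of_forall_mem_fixed {σ : Perm α} {s : Set α}
    (h : ∀ x ∈ s, σ x = x) : σ ∈ partitionStabilizer s :=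
  .inl ⟨fun x hx => (h x hx).symm ▸ hx,
    fun _ hx hσx => hx (σ.injective (h _ hσx) ▸ hσx)⟩

end Equiv.Perm

open Equiv.Perm

def colorLabels : Set (Fin 6) := {i | (i : ℕ) < 3}

theorem ccAut_le_partitionStabilizer : ccAut ≤ partitionStabilizer colorLabels := by
  refine (Subgroup.closure_le _).2 ?_
  rintro σ ((hσ | hσ) | rfl)
  · rw [← partitionStabilizer_compl]
    exact mem_partitionStabilizer_of_forall_mem_fixed fun i hi => hσ i (not_lt.1 hi)
  · exact mem_partitionStabilizer_of_forall_mem_fixed hσ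
  · refine .inr ⟨?_, ?_⟩ <;> unfold MapsTo colorLabels <;> decide

theorem mapsTo_fermF_of_s3s3Parity_eq_one :
    ∀ φ ∈ partitionStabilizer colorLabels, s3s3Parity φ = 1 →
      MapsTo (inducedMap φ) fermF fermF ∧ MapsTo (inducedMap φ) fermF' fermF' := by
  simp only [mem_partitionStabilizer, colorLabels, MapsTo, mem_compl_iff, mem_ofPred_eq,
    fermF, fermF', mem_insert_iff, mem_singleton_iff, forall_eq_or_imp, forall_eq]
  decide +kernel

theorem mapsTo_fermF'_of_s3s3Parity_eq_neg_one :
    ∀ φ ∈ partitionStabilizer colorLabels, s3s3Parity φ = -1 →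
      MapsTo (inducedMap φ) fermF fermF' ∧ MapsTo (inducedMap φ) fermF' fermF := by
  simp only [mem_partitionStabilizer, colorLabels, MapsTo, mem_compl_iff, mem_ofPred_eq,
    fermF, fermF', mem_insert_iff, mem_singleton_iff, forall_eq_or_imp, forall_eq]
  decide +kernel

/-- An element of the color code automorphism group of even `S₃×S₃`-parity sends each
fermion to a fermion in the same fermion group (`F` to `F`, `F'` to `F'`); an element of
odd `S₃×S₃`-parity exchanges the two fermion groups. -/
theorem parity_fermion_groups :
    ∀ φ ∈ ccAut,
      (s3s3Parity φ = 1 →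
        (∀ f ∈ fermF, inducedMap φ f ∈ fermF) ∧
        (∀ f ∈ fermF', inducedMap φ f ∈ fermF')) ∧
      (s3s3Parity φ = -1 →
        (∀ f ∈ fermF, inducedMap φ f ∈ fermF') ∧
        (∀ f ∈ fermF', inducedMap φ f ∈ fermF)) := fun φ hφ =>
  ⟨mapsTo_fermF_of_s3s3Parity_eq_one φ (ccAut_le_partitionStabilizer hφ),
    mapsTo_fermF'_of_s3s3Parity_eq_neg_one φ (ccAut_le_partitionStabilizer hφ)⟩
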